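/- arXiv:2009.02354 — 2 statements merged into one kernel-verified Lean document; each statement's English description precedes it below -/
import Mathlib

section
/- If a Hermitian operator H on a bipartite Hilbert space H_L ⊗ H_R has an almost-Schmidt decomposition H = H_L ⊗ 1_R + 1_L ⊗ H_R + Σ_{a=1}^{N} Σ_{i=1}^{D_a} s_a · O_L^{a,i} ⊗ O_R^{a,i}, where the full collections {O_L^{a,i}} and {O_R^{a,i}} are each orthonormal with respect to the normalized Frobenius inner product ⟨A,B⟩ = Tr(A†B)/Tr(1), the s_a > 0 are distinct, H_L ⊗ 1_R and 1_L ⊗ H_R are Hermitian, and all O_L^{a,i}, O_R^{a,i} are traceless, then for any subset 𝒜 ⊆ {1,…,N} the truncated operator H' = H_L ⊗ 1_R + 1_L ⊗ H_R + Σ_{a∈𝒜} Σ_i s_a · O_L^{a,i} ⊗ O_R^{a,i} is Hermitian. -/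
/-!
The interaction part `S = ∑ s_a O_L^{a,i} ⊗ O_R^{a,i}` is Hermitian, so
`Sᴴ = ∑ s_a (O_L^{a,i})ᴴ ⊗ (O_R^{a,i})ᴴ` is a second decomposition of `S` with orthonormal
factors. Contracting `S` with itself over the right factor gives the operator
`X ↦ ∑ s_a² ⟨O_L^{a,i}, X⟩ O_L^{a,i}` on the left factor, and computing the same contraction from
the second decomposition gives `X ↦ ∑ s_a² ⟨(O_L^{a,i})ᴴ, X⟩ (O_L^{a,i})ᴴ`. Since the `s_a²` are
distinct and nonzero, the projection `Π` onto the `s_a²`-eigenspaces with `a ∈ 𝒜` is a polynomial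
without constant term in this operator, so both decompositions give the same `Π`. Applying
`Π ⊗ 1` to `S` gives the truncated sum, and applying it to `Sᴴ = S` gives its adjoint.
-/

open Matrix
open scoped Kronecker

noncomputable def nFrobInner {n : Type*} [Fintype n] [DecidableEq n]
    (A B : Matrix n n ℂ) : ℂ :=
  (Aᴴ * B).trace / (Fintype.card n : ℂ)

open ComplexConjugate Polynomial

section FrobeniusInner

variable {n ι : Type*} [Fintype n] [DecidableEq n]

noncomputable def nFrobInnerₗ (A : Matrix n n ℂ) : Matrix n n ℂ →ₗ[ℂ] ℂ where
  toFun := nFrobInner A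
  map_add' B C := by simp only [nFrobInner, Matrix.mul_add, trace_add, add_div]
  map_smul' c B := by simp only [nFrobInner, Matrix.mul_smul, trace_smul, smul_eq_mul,
    RingHom.id_apply, mul_div_assoc]

@[simp]
theorem nFrobInnerₗ_apply (A B : Matrix n n ℂ) : nFrobInnerₗ A B = nFrobInner A B := rfl

theorem nFrobInner_conj_symm (A B : Matrix n n ℂ) :
    conj (nFrobInner B A) = nFrobInner A B := by
  rw [nFrobInner, nFrobInner, map_div₀, ← Complex.star_def, ← trace_conjTranspose,
    conjTranspose_mul, conjTranspose_conjTranspose, star_natCast]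

theorem nFrobInner_conjTranspose (A B : Matrix n n ℂ) :
    nFrobInner Aᴴ Bᴴ = nFrobInner B A := by
  rw [nFrobInner, nFrobInner, conjTranspose_conjTranspose, trace_mul_comm]

variable [DecidableEq ι]

def FrobOrthonormal (u : ι → Matrix n n ℂ) : Prop :=
  ∀ p q, nFrobInner (u p) (u q) = if p = q then 1 else 0

variable {u : ι → Matrix n n ℂ}

theorem FrobOrthonormal.conjTranspose (hu : FrobOrthonormal u) :
    FrobOrthonormal fun p => (u p)ᴴ := fun p q => by
  rw [nFrobInner_conjTranspose, hu]
  exact if_congr eq_comm rfl rfl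

variable [Fintype ι]

theorem FrobOrthonormal.inner_sum_smul_right (hu : FrobOrthonormal u) (c : ι → ℂ) (p : ι) :
    nFrobInner (u p) (∑ q, c q • u q) = c p := by
  rw [← nFrobInnerₗ_apply, map_sum]
  simp [hu p]

theorem FrobOrthonormal.inner_sum_smul_left (hu : FrobOrthonormal u) (c : ι → ℂ) (p : ι) :
    nFrobInner (∑ q, c q • u q) (u p) = conj (c p) := by
  rw [← nFrobInner_conj_symm, hu.inner_sum_smul_right]

end FrobeniusInner

theorem Polynomial.exists_mul_eval_eq {K ι : Type*} [Field K] [Fintype ι] {c g : ι → K}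
    (hc : ∀ p, c p ≠ 0) (hg : g.FactorsThrough c) : ∃ f : K[X], ∀ p, c p * f.eval (c p) = g p := by
  classical
  refine ⟨Lagrange.interpolate (Finset.univ.image c) id fun x => Function.extend c g 0 x / x,
    fun p => ?_⟩
  have hnode := Lagrange.eval_interpolate_at_node (fun x => Function.extend c g 0 x / x)
    (Set.injOn_id _) (Finset.mem_image_of_mem c (Finset.mem_univ p))
  rw [id, hg.extend_apply] at hnode
  rw [hnode, mul_div_cancel₀ _ (hc p)]

section RankOneSum

variable {n ι : Type*} [Fintype n] [DecidableEq n] [Fintype ι]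

noncomputable def frobRankOneSum (u : ι → Matrix n n ℂ) :
    (ι → ℂ) →ₗ[ℂ] Module.End ℂ (Matrix n n ℂ) :=
  Fintype.linearCombination ℂ fun p => (nFrobInnerₗ (u p)).smulRight (u p)

theorem frobRankOneSum_apply (u : ι → Matrix n n ℂ) (c : ι → ℂ) (X : Matrix n n ℂ) :
    frobRankOneSum u c X = ∑ p, (c p * nFrobInner (u p) X) • u p := by
  simp [frobRankOneSum, Fintype.linearCombination_apply, smul_smul]

variable [DecidableEq ι] {u : ι → Matrix n n ℂ}

theorem FrobOrthonormal.frobRankOneSum_apply_self (hu : FrobOrthonormal u) (c : ι → ℂ) (p : ι) :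
    frobRankOneSum u c (u p) = c p • u p := by
  simp [frobRankOneSum_apply, hu _ p]

theorem FrobOrthonormal.frobRankOneSum_mul (hu : FrobOrthonormal u) (c d : ι → ℂ) :
    frobRankOneSum u c * frobRankOneSum u d = frobRankOneSum u (c * d) := by
  ext1 X
  simp only [Module.End.mul_apply, frobRankOneSum_apply _ _ X, frobRankOneSum_apply _ c,
    hu.inner_sum_smul_right, Pi.mul_apply, mul_assoc]

theorem FrobOrthonormal.frobRankOneSum_pow_succ (hu : FrobOrthonormal u) (c : ι → ℂ) (k : ℕ) :
    frobRankOneSum u c ^ (k + 1) = frobRankOneSum u (c ^ (k + 1)) := by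
  induction k with
  | zero => simp
  | succ k ih => rw [pow_succ, ih, hu.frobRankOneSum_mul, ← pow_succ]

theorem FrobOrthonormal.frobRankOneSum_mul_aeval (hu : FrobOrthonormal u) (c : ι → ℂ)
    (f : ℂ[X]) :
    frobRankOneSum u c * aeval (frobRankOneSum u c) f =
      frobRankOneSum u fun p => c p * f.eval (c p) := by
  have hcoeff : (fun p => c p * f.eval (c p)) =
      ∑ k ∈ Finset.range (f.natDegree + 1), f.coeff k • c ^ (k + 1) := by
    ext p
    simp only [eval_eq_sum_range, Finset.mul_sum, Finset.sum_apply, Pi.smul_apply, Pi.pow_apply,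
      smul_eq_mul]
    exact Finset.sum_congr rfl fun k _ => by ring
  rw [aeval_eq_sum_range, Finset.mul_sum, hcoeff, map_sum]
  refine Finset.sum_congr rfl fun k _ => ?_
  rw [mul_smul_comm, ← pow_succ', hu.frobRankOneSum_pow_succ, map_smul]

theorem FrobOrthonormal.frobRankOneSum_eq_of_eq {u' : ι → Matrix n n ℂ} (hu : FrobOrthonormal u)
    (hu' : FrobOrthonormal u') {c : ι → ℂ} (hc : ∀ p, c p ≠ 0)
    (h : frobRankOneSum u c = frobRankOneSum u' c) {g : ι → ℂ} (hg : g.FactorsThrough c) :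
    frobRankOneSum u g = frobRankOneSum u' g := by
  obtain ⟨f, hf⟩ := exists_mul_eval_eq hc hg
  have hgf : g = fun p => c p * f.eval (c p) := funext fun p => (hf p).symm
  rw [hgf, ← hu.frobRankOneSum_mul_aeval, ← hu'.frobRankOneSum_mul_aeval, h]

end RankOneSum

theorem Matrix.kronecker_sum {α l m n p κ : Type*} [NonUnitalNonAssocSemiring α]
    (s : Finset κ) (A : Matrix l m α) (B : κ → Matrix n p α) :
    A ⊗ₖ (∑ k ∈ s, B k) = ∑ k ∈ s, A ⊗ₖ B k := by
  ext; simp [Matrix.sum_apply, Finset.mul_sum]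

theorem Matrix.sum_kronecker {α l m n p κ : Type*} [NonUnitalNonAssocSemiring α]
    (s : Finset κ) (A : κ → Matrix l m α) (B : Matrix n p α) :
    (∑ k ∈ s, A k) ⊗ₖ B = ∑ k ∈ s, A k ⊗ₖ B := by
  ext; simp [Matrix.sum_apply, Finset.sum_mul]

section FrobContractLeft

variable {L R ι κ : Type*} [Fintype L] [DecidableEq L] [Fintype ι] [Fintype κ]

noncomputable def frobContractLeft (X : Matrix L L ℂ) :
    Matrix (L × R) (L × R) ℂ →ₗ[ℂ] Matrix R R ℂ where
  toFun M := Matrix.of fun r r' => nFrobInner X (M.submatrix (·, r) (·, r'))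
  map_add' M N := by
    ext
    exact map_add (nFrobInnerₗ X) (M.submatrix _ _) (N.submatrix _ _)
  map_smul' c M := by
    ext
    exact map_smul (nFrobInnerₗ X) c (M.submatrix _ _)

theorem frobContractLeft_kronecker (X A : Matrix L L ℂ) (B : Matrix R R ℂ) :
    frobContractLeft X (A ⊗ₖ B) = nFrobInner X A • B := by
  ext r r'
  have hblock : (A ⊗ₖ B).submatrix (·, r) (·, r') = B r r' • A := by
    ext; simp [mul_comm]
  simp [frobContractLeft, hblock, ← nFrobInnerₗ_apply, mul_comm]

theorem frobContractLeft_sum_kronecker (w : κ → ℂ) (A : κ → Matrix L L ℂ)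
    (B : κ → Matrix R R ℂ) (X : Matrix L L ℂ) :
    frobContractLeft X (∑ k, w k • (A k ⊗ₖ B k)) = ∑ k, (w k * nFrobInner X (A k)) • B k := by
  simp only [map_sum, map_smul, frobContractLeft_kronecker, smul_smul]

noncomputable def frobRankOneSumOnLeft (u : ι → Matrix L L ℂ) (c : ι → ℂ)
    (M : Matrix (L × R) (L × R) ℂ) : Matrix (L × R) (L × R) ℂ :=
  ∑ q, c q • (u q ⊗ₖ frobContractLeft (u q) M)

theorem frobRankOneSumOnLeft_sum_kronecker (u : ι → Matrix L L ℂ) (c : ι → ℂ) (w : κ → ℂ)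
    (A : κ → Matrix L L ℂ) (B : κ → Matrix R R ℂ) :
    frobRankOneSumOnLeft u c (∑ k, w k • (A k ⊗ₖ B k)) =
      ∑ k, w k • (frobRankOneSum u c (A k) ⊗ₖ B k) := by
  simp only [frobRankOneSumOnLeft, frobContractLeft_sum_kronecker, frobRankOneSum_apply,
    kronecker_sum, sum_kronecker, kronecker_smul, smul_kronecker, Finset.smul_sum, smul_smul]
  rw [Finset.sum_comm]
  exact Finset.sum_congr rfl fun k _ => Finset.sum_congr rfl fun q _ => by ring_nf

end FrobContractLeft

section FrobContractRight

variable {L R κ : Type*} [Fintype R] [DecidableEq R] [Fintype κ]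

noncomputable def frobContractRight (Y : Matrix R R ℂ) :
    Matrix (L × R) (L × R) ℂ →ₗ[ℂ] Matrix L L ℂ :=
  (frobContractLeft Y).comp
    (reindexLinearEquiv ℂ ℂ (Equiv.prodComm L R) (Equiv.prodComm L R)).toLinearMap

theorem frobContractRight_kronecker (Y : Matrix R R ℂ) (A : Matrix L L ℂ) (B : Matrix R R ℂ) :
    frobContractRight Y (A ⊗ₖ B) = nFrobInner Y B • A := by
  have hswap : reindex (Equiv.prodComm L R) (Equiv.prodComm L R) (A ⊗ₖ B) = B ⊗ₖ A := by
    ext; simp [mul_comm]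
  simp [frobContractRight, hswap, frobContractLeft_kronecker]

theorem frobContractRight_sum_kronecker (w : κ → ℂ) (A : κ → Matrix L L ℂ)
    (B : κ → Matrix R R ℂ) (Y : Matrix R R ℂ) :
    frobContractRight Y (∑ k, w k • (A k ⊗ₖ B k)) = ∑ k, (w k * nFrobInner Y (B k)) • A k := by
  simp only [map_sum, map_smul, frobContractRight_kronecker, smul_smul]

end FrobContractRight

section Schmidt

variable {L R ι : Type*} [Fintype L] [DecidableEq L] [Fintype R] [DecidableEq R] [Fintype ι]
  [DecidableEq ι]

theorem FrobOrthonormal.frobContractRight_frobContractLeft {v : ι → Matrix R R ℂ}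
    (hv : FrobOrthonormal v) (u : ι → Matrix L L ℂ) (σ : ι → ℝ) (X : Matrix L L ℂ) :
    let S := ∑ p, (σ p : ℂ) • (u p ⊗ₖ v p)
    frobContractRight (frobContractLeft X S) S = frobRankOneSum u (fun p => (σ p : ℂ) ^ 2) X := by
  simp only [frobContractRight_sum_kronecker, frobContractLeft_sum_kronecker,
    hv.inner_sum_smul_left, frobRankOneSum_apply, map_mul, Complex.conj_ofReal,
    nFrobInner_conj_symm]
  exact Finset.sum_congr rfl fun p _ => by ring_nf

theorem isHermitian_sum_kronecker_of_factorsThrough {u : ι → Matrix L L ℂ}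
    {v : ι → Matrix R R ℂ} (hu : FrobOrthonormal u) (hv : FrobOrthonormal v) {σ : ι → ℝ}
    (hσ : ∀ p, σ p ≠ 0) (hS : (∑ p, (σ p : ℂ) • (u p ⊗ₖ v p)).IsHermitian) {χ : ι → ℝ}
    (hχ : χ.FactorsThrough fun p => σ p ^ 2) :
    (∑ p, ((χ p : ℂ) * σ p) • (u p ⊗ₖ v p)).IsHermitian := by
  set S := ∑ p, (σ p : ℂ) • (u p ⊗ₖ v p) with hSdef
  have hSH : S = ∑ p, (σ p : ℂ) • ((u p)ᴴ ⊗ₖ (v p)ᴴ) := by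
    rw [← hS.eq, hSdef, conjTranspose_sum]
    simp [conjTranspose_smul, conjTranspose_kronecker]
  have hsq : frobRankOneSum u (fun p => (σ p : ℂ) ^ 2) =
      frobRankOneSum (fun p => (u p)ᴴ) (fun p => (σ p : ℂ) ^ 2) := by
    ext1 X
    -- both sides are the self-contraction of `S`, read off from `S` and from `Sᴴ`
    rw [← hv.frobContractRight_frobContractLeft u σ X,
      ← hv.conjTranspose.frobContractRight_frobContractLeft (fun p => (u p)ᴴ) σ X, ← hSH]
  have hχ' : frobRankOneSum u (fun p => (χ p : ℂ)) =
      frobRankOneSum (fun p => (u p)ᴴ) (fun p => (χ p : ℂ)) := by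
    refine hu.frobRankOneSum_eq_of_eq hu.conjTranspose (fun p => by simpa using hσ p) hsq ?_
    intro p q (hpq : (σ p : ℂ) ^ 2 = (σ q : ℂ) ^ 2)
    exact congrArg ((↑) : ℝ → ℂ) (hχ (by exact_mod_cast hpq))
  rw [IsHermitian, conjTranspose_sum]
  calc ∑ p, (((χ p : ℂ) * σ p) • (u p ⊗ₖ v p))ᴴ
      = ∑ p, (σ p : ℂ) •
          (frobRankOneSum (fun p => (u p)ᴴ) (fun p => (χ p : ℂ)) (u p)ᴴ ⊗ₖ (v p)ᴴ) := by
        refine Finset.sum_congr rfl fun p _ => ?_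
        rw [hu.conjTranspose.frobRankOneSum_apply_self, conjTranspose_smul,
          conjTranspose_kronecker, smul_kronecker, smul_smul, Complex.star_def, map_mul,
          Complex.conj_ofReal, Complex.conj_ofReal, mul_comm]
    _ = frobRankOneSumOnLeft u (fun p => (χ p : ℂ)) S := by
        rw [hSH, frobRankOneSumOnLeft_sum_kronecker, hχ']
    _ = ∑ p, (σ p : ℂ) • (frobRankOneSum u (fun p => (χ p : ℂ)) (u p) ⊗ₖ v p) :=
        frobRankOneSumOnLeft_sum_kronecker _ _ _ _ _
    _ = ∑ p, ((χ p : ℂ) * σ p) • (u p ⊗ₖ v p) := by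
        refine Finset.sum_congr rfl fun p _ => ?_
        rw [hu.frobRankOneSum_apply_self, smul_kronecker, smul_smul, mul_comm]

end Schmidt

theorem stmt0_general {L R : Type*} [Fintype L] [DecidableEq L] [Fintype R] [DecidableEq R]
    (N : ℕ) (Deg : Fin N → ℕ) (s : Fin N → ℝ)
    (HL : Matrix L L ℂ) (HR : Matrix R R ℂ)
    (OL : (a : Fin N) → Fin (Deg a) → Matrix L L ℂ)
    (OR' : (a : Fin N) → Fin (Deg a) → Matrix R R ℂ)
    (H : Matrix (L × R) (L × R) ℂ)
    (hH : H = HL ⊗ₖ (1 : Matrix R R ℂ) + (1 : Matrix L L ℂ) ⊗ₖ HR +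
        ∑ a : Fin N, ∑ i : Fin (Deg a), (s a : ℂ) • (OL a i ⊗ₖ OR' a i))
    (hHerm : H.IsHermitian)
    (hHLHerm : (HL ⊗ₖ (1 : Matrix R R ℂ)).IsHermitian)
    (hHRHerm : ((1 : Matrix L L ℂ) ⊗ₖ HR).IsHermitian)
    (hLorth : ∀ p q : Σ a : Fin N, Fin (Deg a),
      nFrobInner (OL p.1 p.2) (OL q.1 q.2) = if p = q then 1 else 0)
    (hRorth : ∀ p q : Σ a : Fin N, Fin (Deg a),
      nFrobInner (OR' p.1 p.2) (OR' q.1 q.2) = if p = q then 1 else 0)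
    (hspos : ∀ a, 0 < s a) (hsinj : Function.Injective s)
    (𝒜 : Finset (Fin N)) :
    (HL ⊗ₖ (1 : Matrix R R ℂ) + (1 : Matrix L L ℂ) ⊗ₖ HR +
      ∑ a ∈ 𝒜, ∑ i : Fin (Deg a), (s a : ℂ) • (OL a i ⊗ₖ OR' a i)).IsHermitian := by
  let χ : (Σ a : Fin N, Fin (Deg a)) → ℝ := fun p => if p.1 ∈ 𝒜 then 1 else 0
  have hS : (∑ p : Σ a : Fin N, Fin (Deg a),
      (s p.1 : ℂ) • (OL p.1 p.2 ⊗ₖ OR' p.1 p.2)).IsHermitian := by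
    rw [Fintype.sum_sigma, eq_sub_of_add_eq' hH.symm]
    exact hHerm.sub (hHLHerm.add hHRHerm)
  have hχ : χ.FactorsThrough fun p => s p.1 ^ 2 := fun p q hpq => by
    have hsq : s p.1 = s q.1 := (pow_left_inj₀ (hspos _).le (hspos _).le two_ne_zero).1 hpq
    simp only [χ, hsinj hsq]
  have htrunc := isHermitian_sum_kronecker_of_factorsThrough hLorth hRorth
    (fun p => (hspos p.1).ne') hS hχ
  rw [Fintype.sum_sigma] at htrunc
  rw [← Fintype.sum_ite_mem]
  convert hHLHerm.add hHRHerm |>.add htrunc using 3 with a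
  split_ifs with ha <;> simp [χ, ha]

/-- Truncating an almost-Schmidt decomposition of a Hermitian operator by keeping any
subset of the (distinct, positive) singular values yields a Hermitian operator. -/
theorem stmt0 {L R : Type*} [Fintype L] [DecidableEq L] [Fintype R] [DecidableEq R]
    (N : ℕ) (Deg : Fin N → ℕ) (s : Fin N → ℝ)
    (HL : Matrix L L ℂ) (HR : Matrix R R ℂ)
    (OL : (a : Fin N) → Fin (Deg a) → Matrix L L ℂ)
    (OR' : (a : Fin N) → Fin (Deg a) → Matrix R R ℂ)
    (H : Matrix (L × R) (L × R) ℂ)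
    (hH : H = HL ⊗ₖ (1 : Matrix R R ℂ) + (1 : Matrix L L ℂ) ⊗ₖ HR +
        ∑ a : Fin N, ∑ i : Fin (Deg a), (s a : ℂ) • (OL a i ⊗ₖ OR' a i))
    (hHerm : H.IsHermitian)
    (hHLHerm : (HL ⊗ₖ (1 : Matrix R R ℂ)).IsHermitian)
    (hHRHerm : ((1 : Matrix L L ℂ) ⊗ₖ HR).IsHermitian)
    (hLorth : ∀ p q : Σ a : Fin N, Fin (Deg a),
      nFrobInner (OL p.1 p.2) (OL q.1 q.2) = if p = q then 1 else 0)
    (hRorth : ∀ p q : Σ a : Fin N, Fin (Deg a),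
      nFrobInner (OR' p.1 p.2) (OR' q.1 q.2) = if p = q then 1 else 0)
    (hspos : ∀ a, 0 < s a) (hsinj : Function.Injective s)
    (hLtr : ∀ a i, (OL a i).trace = 0) (hRtr : ∀ a i, (OR' a i).trace = 0)
    (𝒜 : Finset (Fin N)) :
    (HL ⊗ₖ (1 : Matrix R R ℂ) + (1 : Matrix L L ℂ) ⊗ₖ HR +
      ∑ a ∈ 𝒜, ∑ i : Fin (Deg a), (s a : ℂ) • (OL a i ⊗ₖ OR' a i)).IsHermitian :=
  stmt0_general N Deg s HL HR OL OR' H hH hHerm hHLHerm hHRHerm hLorth hRorth hspos hsinj 𝒜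
end

section
/- Let {W^(n)}_{n=1}^N be a collection of matrices where W^(n) has size D^(n) × D^(n+1) (indices mod N), interpreted as a unit-cell MPO whose finite state machine is loop free (admits a topological ordering of the union of bond-index sets satisfying W^(n)_{ab} = 0 whenever (a,n) ⪰ (b,n+1)). Then there exist injections P_n : {1,…,D^(n+1)} → {1,…,D} with D = Σ_n D^(n), realized as D^(n) × D matrices with P_n† P_n = I, such that the enlarged matrices W'^(n) := P_{n−1}† W^(n) P_n are all D × D upper triangular and satisfy the gauge relation P_{n−1} W'^(n) = W^(n) P_n. -/
/-!
Send the bond index `(a, n)` to position `O ⟨n, a⟩` of the enlarged bond space. The 0-1 matrices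
of these embeddings are co-isometries, and the `(i, j)` entry of `Pₙᴴ Wₙ Pₙ₊₁` is the entry
`Wₙ a b` with `O ⟨n, a⟩ = i` and `O ⟨n + 1, b⟩ = j` (or `0` if there is none), which vanishes for
`j ≤ i` precisely by the ordering hypothesis.
-/

open Matrix

namespace Function.Embedding

variable {m n p : Type*} [DecidableEq n] (α : Type*) [Semiring α]

def toMatrix (f : m ↪ n) : Matrix m n α :=
  (1 : Matrix n n α).submatrix f id

variable {α}

theorem toMatrix_apply (f : m ↪ n) (b : m) (i : n) :
    f.toMatrix α b i = if f b = i then 1 else 0 :=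
  one_apply

variable [StarRing α]

theorem toMatrix_mul_conjTranspose [Fintype n] [DecidableEq m] (f : m ↪ n) :
    f.toMatrix α * (f.toMatrix α)ᴴ = 1 := by
  rw [toMatrix, conjTranspose_submatrix, conjTranspose_one,
    ← submatrix_mul _ _ _ _ _ Function.bijective_id, Matrix.mul_one, submatrix_one_embedding]

theorem conjTranspose_toMatrix_mul_mul_toMatrix_apply_eq_zero [Fintype m] [Fintype p]
    [DecidableEq p] (f : m ↪ n) (g : p ↪ n) (A : Matrix m p α) {i j : n}
    (hA : ∀ a b, f a = i → g b = j → A a b = 0) :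
    ((f.toMatrix α)ᴴ * A * g.toMatrix α) i j = 0 := by
  simp only [mul_apply, conjTranspose_apply, toMatrix_apply]
  refine Finset.sum_eq_zero fun b _ => ?_
  by_cases hb : g b = j
  · refine mul_eq_zero_of_left (Finset.sum_eq_zero fun a _ => ?_) _
    by_cases ha : f a = i
    · rw [hA a b ha hb, mul_zero]
    · rw [if_neg ha, star_zero, zero_mul]
  · rw [if_neg hb, mul_zero]

end Function.Embedding

/-- A loop-free unit-cell MPO (one admitting a topological ordering of its bond indices)
can be embedded, via 0-1 injection matrices `P n` with `P n * (P n)ᴴ = 1`, into enlarged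
`D × D` matrices `(P n)ᴴ * W n * P (n+1)` that are strictly upper triangular and satisfy
the gauge relation `P n * W' n = W n * P (n+1)`. -/
theorem stmt6 {N : ℕ} [NeZero N] (D : Fin N → ℕ)
    (W : (n : Fin N) → Matrix (Fin (D n)) (Fin (D (n + 1))) ℂ)
    (O : (Σ n : Fin N, Fin (D n)) ≃ Fin (∑ n, D n))
    (hord : ∀ (n : Fin N) (a : Fin (D n)) (b : Fin (D (n + 1))),
      O ⟨n + 1, b⟩ ≤ O ⟨n, a⟩ → W n a b = 0) :
    ∃ ι : (n : Fin N) → Fin (D n) ↪ Fin (∑ n, D n),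
    ∃ P : (n : Fin N) → Matrix (Fin (D n)) (Fin (∑ n, D n)) ℂ,
      (∀ n b i, P n b i = if ι n b = i then 1 else 0) ∧
      (∀ n, P n * (P n)ᴴ = 1) ∧
      (∀ (n : Fin N) (i j : Fin (∑ n, D n)), j ≤ i →
        ((P n)ᴴ * W n * P (n + 1)) i j = 0) ∧
      (∀ n : Fin N, P n * ((P n)ᴴ * W n * P (n + 1)) = W n * P (n + 1)) := by
  let ι n : Fin (D n) ↪ Fin (∑ n, D n) := (Function.Embedding.sigmaMk n).trans O.toEmbedding
  refine ⟨ι, fun n => (ι n).toMatrix ℂ, fun n => (ι n).toMatrix_apply, fun n =>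
    (ι n).toMatrix_mul_conjTranspose, fun n i j hji => ?_, fun n => ?_⟩
  · refine Function.Embedding.conjTranspose_toMatrix_mul_mul_toMatrix_apply_eq_zero _ _ _ ?_
    rintro a b rfl rfl
    exact hord n a b hji
  · rw [← Matrix.mul_assoc, ← Matrix.mul_assoc, Function.Embedding.toMatrix_mul_conjTranspose,
      Matrix.one_mul]
end
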